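/- Proposition 2 (the proposed surrogate is a valid majorizer): Let B ∈ ℝ^{3n×m} with rows B_i, let D^(1), …, D^(3n) ∈ ℝ^{m×m} be symmetric matrices, let b̂ ∈ ℝ^{3n}, and let α ≥ 0. Define the objective F(u) := ∑_{i=1}^{3n} (B_i u + uᵀ D^(i) u − b̂_i)² + α ∑_{j=1}^m u_j. Fix w ∈ [0,1]^m, set g_i := B_i w + wᵀ D^(i) w − b̂_i and h_i := B_i + 2 wᵀ D^(i), define ψ_i(v) := g_i² + 2 g_i ∑_{j=1}^m h_{ij} v_j + 2 (g_i λ_M(D^(i), g_i) + ‖h_i‖²) ∑_{j=1}^m v_j² + 2 m σ(D^(i))² ∑_{j=1}^m v_j⁴, and define ψ(v) := ∑_{i=1}^{3n} ψ_i(v) + α ∑_{j=1}^m (w_j + v_j). Then (Condition 1) F(w + v) ≤ ψ(v) for every v ∈ ℝ^m with 0 ≤ w + v ≤ 1, and (Condition 2) ψ(0) = F(w). -/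

import Mathlib

/-! Write `u = w + v`. Since `D⁽ⁱ⁾` is symmetric, the `i`-th residual at `u` is `g_i + a + q`
with `a = h_i · v` and `q = vᵀ D⁽ⁱ⁾ v`. Expanding the square and using `(a + q)² ≤ 2a² + 2q²`,
the cross term `g_i q` is controlled by the Rayleigh quotient (the eigenvalue `λ_M` is chosen
so that the bound has the right direction for the sign of `g_i`), `a²` by Cauchy–Schwarz, and
`q² ≤ σ(D⁽ⁱ⁾)² ‖v‖⁴ ≤ m σ(D⁽ⁱ⁾)² ∑ v_j⁴`. The linear `α`-terms agree exactly. -/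

/-- The smallest eigenvalue of a real symmetric (Hermitian) matrix. -/
noncomputable def lamMin {m : ℕ} {D : Matrix (Fin m) (Fin m) ℝ} (hD : D.IsHermitian) : ℝ :=
  ⨅ i, hD.eigenvalues i

/-- The largest eigenvalue of a real symmetric (Hermitian) matrix. -/
noncomputable def lamMax {m : ℕ} {D : Matrix (Fin m) (Fin m) ℝ} (hD : D.IsHermitian) : ℝ :=
  ⨆ i, hD.eigenvalues i

/-- `λ_M(D, g)`: the smallest eigenvalue if `g < 0`, the largest if `g ≥ 0`. -/
noncomputable def lamM {m : ℕ} {D : Matrix (Fin m) (Fin m) ℝ} (hD : D.IsHermitian)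
    (g : ℝ) : ℝ :=
  if g < 0 then lamMin hD else lamMax hD

/-- `σ(D)`: the largest singular value of `D`, i.e. the operator norm of `D`
with respect to the Euclidean norm. -/
noncomputable def sigmaOp {m : ℕ} (D : Matrix (Fin m) (Fin m) ℝ) : ℝ :=
  ‖Matrix.toEuclideanCLM (𝕜 := ℝ) D‖

open Matrix

namespace Matrix

theorem IsSymm.dotProduct_add_mulVec_add {n R : Type*} [Fintype n] [CommRing R]
    {D : Matrix n n R} (hD : D.IsSymm) (b x y : n → R) :
    b ⬝ᵥ (x + y) + (x + y) ⬝ᵥ D *ᵥ (x + y) =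
      (b ⬝ᵥ x + x ⬝ᵥ D *ᵥ x) + (b + 2 • x ᵥ* D) ⬝ᵥ y + y ⬝ᵥ D *ᵥ y := by
  have hsym : y ⬝ᵥ D *ᵥ x = x ᵥ* D ⬝ᵥ y := by
    rw [dotProduct_comm, ← vecMul_transpose, hD.eq]
  simp only [mulVec_add, dotProduct_add, add_dotProduct, two_smul, hsym, dotProduct_mulVec x D y]
  ring

variable {n : Type*} [Fintype n] [DecidableEq n]

theorem dotProduct_algebraMap_mulVec (r : ℝ) (v : n → ℝ) :
    v ⬝ᵥ algebraMap ℝ (Matrix n n ℝ) r *ᵥ v = r * (v ⬝ᵥ v) := by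
  rw [Algebra.algebraMap_eq_smul_one, smul_mulVec, one_mulVec, dotProduct_smul, smul_eq_mul]

namespace IsHermitian

open scoped MatrixOrder

variable {A : Matrix n n ℝ}

theorem mul_dotProduct_self_le_dotProduct_mulVec (hA : A.IsHermitian) {r : ℝ}
    (hr : ∀ i, r ≤ hA.eigenvalues i) (v : n → ℝ) : r * (v ⬝ᵥ v) ≤ v ⬝ᵥ A *ᵥ v := by
  have hle : algebraMap ℝ _ r ≤ A := by
    rw [algebraMap_le_iff_le_spectrum, hA.spectrum_real_eq_range_eigenvalues]
    rintro _ ⟨i, rfl⟩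
    exact hr i
  have := (le_iff.mp hle).dotProduct_mulVec_nonneg v
  rw [star_trivial, sub_mulVec, dotProduct_sub, dotProduct_algebraMap_mulVec] at this
  linarith

theorem dotProduct_mulVec_le_mul_dotProduct_self (hA : A.IsHermitian) {r : ℝ}
    (hr : ∀ i, hA.eigenvalues i ≤ r) (v : n → ℝ) : v ⬝ᵥ A *ᵥ v ≤ r * (v ⬝ᵥ v) := by
  have hle : A ≤ algebraMap ℝ _ r := by
    rw [le_algebraMap_iff_spectrum_le, hA.spectrum_real_eq_range_eigenvalues]
    rintro _ ⟨i, rfl⟩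
    exact hr i
  have := (le_iff.mp hle).dotProduct_mulVec_nonneg v
  rw [star_trivial, sub_mulVec, dotProduct_sub, dotProduct_algebraMap_mulVec] at this
  linarith

end IsHermitian

end Matrix

section SurrogateBounds

variable {m : ℕ}

theorem abs_dotProduct_mulVec_le_sigmaOp (D : Matrix (Fin m) (Fin m) ℝ)
    (v : EuclideanSpace ℝ (Fin m)) :
    |v.ofLp ⬝ᵥ D *ᵥ v.ofLp| ≤ sigmaOp D * ‖v‖ ^ 2 := by
  have hinner : v.ofLp ⬝ᵥ D *ᵥ v.ofLp = inner ℝ v (toEuclideanCLM (𝕜 := ℝ) D v) := by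
    rw [EuclideanSpace.inner_eq_star_dotProduct, star_trivial, dotProduct_comm]
    rfl
  calc |v.ofLp ⬝ᵥ D *ᵥ v.ofLp|
      ≤ ‖v‖ * ‖toEuclideanCLM (𝕜 := ℝ) D v‖ := hinner ▸ abs_real_inner_le_norm _ _
    _ ≤ ‖v‖ * (sigmaOp D * ‖v‖) := by gcongr; exact (toEuclideanCLM (𝕜 := ℝ) D).le_opNorm v
    _ = sigmaOp D * ‖v‖ ^ 2 := by ring

variable {D : Matrix (Fin m) (Fin m) ℝ}

theorem lamMin_mul_dotProduct_self_le (hD : D.IsHermitian) (v : Fin m → ℝ) :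
    lamMin hD * (v ⬝ᵥ v) ≤ v ⬝ᵥ D *ᵥ v :=
  hD.mul_dotProduct_self_le_dotProduct_mulVec
    (fun i => ciInf_le (Set.finite_range _).bddBelow i) v

theorem dotProduct_mulVec_le_lamMax_mul (hD : D.IsHermitian) (v : Fin m → ℝ) :
    v ⬝ᵥ D *ᵥ v ≤ lamMax hD * (v ⬝ᵥ v) :=
  hD.dotProduct_mulVec_le_mul_dotProduct_self
    (fun i => le_ciSup (Set.finite_range _).bddAbove i) v

theorem mul_dotProduct_mulVec_le_lamM (hD : D.IsHermitian) (g : ℝ) (v : Fin m → ℝ) :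
    g * (v ⬝ᵥ D *ᵥ v) ≤ g * lamM hD g * (v ⬝ᵥ v) := by
  rw [mul_assoc, lamM]
  split_ifs with hg
  · exact mul_le_mul_of_nonpos_left (lamMin_mul_dotProduct_self_le hD v) hg.le
  · exact mul_le_mul_of_nonneg_left (dotProduct_mulVec_le_lamMax_mul hD v) (not_lt.mp hg)

theorem sq_residual_add_le_surrogate (hD : D.IsHermitian) (b : Fin m → ℝ) (c : ℝ)
    (w v : EuclideanSpace ℝ (Fin m)) :
    let g := b ⬝ᵥ w.ofLp + w.ofLp ⬝ᵥ D *ᵥ w.ofLp - c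
    let h : EuclideanSpace ℝ (Fin m) := WithLp.toLp 2 fun j => b j + 2 * (w.ofLp ᵥ* D) j
    (b ⬝ᵥ (w + v).ofLp + (w + v).ofLp ⬝ᵥ D *ᵥ (w + v).ofLp - c) ^ 2 ≤
      g ^ 2 + 2 * g * ∑ j, h j * v j + 2 * (g * lamM hD g + ‖h‖ ^ 2) * ∑ j, v j ^ 2
        + 2 * m * sigmaOp D ^ 2 * ∑ j, v j ^ 4 := by
  intro g h
  set a := ∑ j, h j * v j
  set q := v.ofLp ⬝ᵥ D *ᵥ v.ofLp
  have hS : ∑ j, v j ^ 2 = ‖v‖ ^ 2 := (EuclideanSpace.real_norm_sq_eq v).symm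
  have hexpand : b ⬝ᵥ (w + v).ofLp + (w + v).ofLp ⬝ᵥ D *ᵥ (w + v).ofLp - c = g + a + q := by
    have ha : a = (b + 2 • w.ofLp ᵥ* D) ⬝ᵥ v.ofLp := by simp [a, h, dotProduct]
    rw [WithLp.ofLp_add, (isHermitian_iff_isSymm.mp hD).dotProduct_add_mulVec_add, ha]
    ring
  have hgq : g * q ≤ g * lamM hD g * ‖v‖ ^ 2 := by
    have hvv : v.ofLp ⬝ᵥ v.ofLp = ‖v‖ ^ 2 := by
      rw [← real_inner_self_eq_norm_sq, EuclideanSpace.inner_eq_star_dotProduct, star_trivial]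
    simpa only [hvv] using mul_dotProduct_mulVec_le_lamM hD g v.ofLp
  have ha : a ^ 2 ≤ (‖h‖ * ‖v‖) ^ 2 := by
    have hCS : |a| ≤ ‖h‖ * ‖v‖ := by
      simpa [a, EuclideanSpace.inner_eq_star_dotProduct, dotProduct, mul_comm]
        using abs_real_inner_le_norm h v
    simpa only [sq_abs] using pow_le_pow_left₀ (abs_nonneg a) hCS 2
  have hq : q ^ 2 ≤ m * sigmaOp D ^ 2 * ∑ j, v j ^ 4 := by
    have hσ : q ^ 2 ≤ (sigmaOp D * ‖v‖ ^ 2) ^ 2 := by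
      simpa only [sq_abs] using
        pow_le_pow_left₀ (abs_nonneg q) (abs_dotProduct_mulVec_le_sigmaOp D v) 2
    have hS2 : (∑ j, v j ^ 2) ^ 2 ≤ m * ∑ j, v j ^ 4 := by
      have := sq_sum_le_card_mul_sum_sq (s := Finset.univ) (f := fun j => v j ^ 2)
      simp_rw [← pow_mul, Finset.card_univ, Fintype.card_fin] at this
      exact this
    rw [← hS] at hσ
    nlinarith [sq_nonneg (sigmaOp D)]
  rw [hexpand, hS]
  nlinarith [sq_nonneg (a - q)]

end SurrogateBounds

theorem surrogate_is_majorizer_general {n m : ℕ} (B : Matrix (Fin (3 * n)) (Fin m) ℝ)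
    (D : Fin (3 * n) → Matrix (Fin m) (Fin m) ℝ) (hD : ∀ i, (D i).IsHermitian)
    (bhat : Fin (3 * n) → ℝ) (α : ℝ)
    (w : EuclideanSpace ℝ (Fin m)) :
    let F : EuclideanSpace ℝ (Fin m) → ℝ := fun u =>
      (∑ i, (dotProduct (B i) u + dotProduct u ((D i).mulVec u) - bhat i) ^ 2)
        + α * ∑ j, u j
    let g : Fin (3 * n) → ℝ := fun i =>
      dotProduct (B i) w + dotProduct w ((D i).mulVec w) - bhat i
    let h : Fin (3 * n) → EuclideanSpace ℝ (Fin m) := fun i =>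
      WithLp.toLp 2 (fun j => B i j + 2 * Matrix.vecMul w (D i) j : Fin m → ℝ)
    let ψ : EuclideanSpace ℝ (Fin m) → ℝ := fun v =>
      (∑ i, (g i ^ 2 + 2 * g i * ∑ j, h i j * v j
        + 2 * (g i * lamM (hD i) (g i) + ‖h i‖ ^ 2) * ∑ j, v j ^ 2
        + 2 * m * sigmaOp (D i) ^ 2 * ∑ j, v j ^ 4))
        + α * ∑ j, (w j + v j)
    (∀ v : EuclideanSpace ℝ (Fin m),
      (∀ j, 0 ≤ w j + v j ∧ w j + v j ≤ 1) → F (w + v) ≤ ψ v) ∧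
    ψ 0 = F w := by
  intro F g h ψ
  refine ⟨fun v _ => ?_, by simp [F, ψ, g]⟩
  exact add_le_add_left
    (Finset.sum_le_sum fun i _ => sq_residual_add_le_surrogate (hD i) (B i) (bhat i) w v) _

/-- Proposition 2: the proposed surrogate is a valid majorizer. -/
theorem surrogate_is_majorizer {n m : ℕ} (B : Matrix (Fin (3 * n)) (Fin m) ℝ)
    (D : Fin (3 * n) → Matrix (Fin m) (Fin m) ℝ) (hD : ∀ i, (D i).IsHermitian)
    (bhat : Fin (3 * n) → ℝ) (α : ℝ) (hα : 0 ≤ α)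
    (w : EuclideanSpace ℝ (Fin m)) (hw : ∀ j, 0 ≤ w j ∧ w j ≤ 1) :
    let F : EuclideanSpace ℝ (Fin m) → ℝ := fun u =>
      (∑ i, (dotProduct (B i) u + dotProduct u ((D i).mulVec u) - bhat i) ^ 2)
        + α * ∑ j, u j
    let g : Fin (3 * n) → ℝ := fun i =>
      dotProduct (B i) w + dotProduct w ((D i).mulVec w) - bhat i
    let h : Fin (3 * n) → EuclideanSpace ℝ (Fin m) := fun i =>
      WithLp.toLp 2 (fun j => B i j + 2 * Matrix.vecMul w (D i) j : Fin m → ℝ)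
    let ψ : EuclideanSpace ℝ (Fin m) → ℝ := fun v =>
      (∑ i, (g i ^ 2 + 2 * g i * ∑ j, h i j * v j
        + 2 * (g i * lamM (hD i) (g i) + ‖h i‖ ^ 2) * ∑ j, v j ^ 2
        + 2 * m * sigmaOp (D i) ^ 2 * ∑ j, v j ^ 4))
        + α * ∑ j, (w j + v j)
    (∀ v : EuclideanSpace ℝ (Fin m),
      (∀ j, 0 ≤ w j + v j ∧ w j + v j ≤ 1) → F (w + v) ≤ ψ v) ∧
    ψ 0 = F w :=
  surrogate_is_majorizer_general B D hD bhat α w
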